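/- arXiv:2006.00637 — 6 statements merged into one kernel-verified Lean document; each statement's English description precedes it below -/
import Mathlib

section
/- Let T be a finite local commutative ring with maximal ideal m and residue field k = T/m, and suppose that the k-vector space Hom_T(k, T) of T-linear maps from k to T is one-dimensional. Then every faithful T-module N contains a T-submodule that is free of rank 1 over T; equivalently, there exists n ∈ N such that the map T → N sending t to t·n is injective. -/
/-!
Write `s = φ 1` for the generator `φ` of `Hom_T(k, T)`. Every element of `T` killed by `m`
defines a map `k → T`, so the one-dimensionality says that every nonzero such element is a unit
multiple of `s`. Since `m` is nilpotent, every nonzero `t` has a nonzero multiple killed by `m`,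
so `s` divides a multiple of `t`. By faithfulness `s • n ≠ 0` for some `n : N`; then `t • n = 0`
would force `s • n = 0`, so `t ↦ t • n` is injective.
-/

open IsLocalRing

theorem Ideal.exists_smul_ne_zero_and_forall_smul_eq_zero_of_isNilpotent {R M : Type*}
    [CommSemiring R] [AddCommMonoid M] [Module R M] {I : Ideal R} (hI : IsNilpotent I)
    {m : M} (hm : m ≠ 0) : ∃ x : R, x • m ≠ 0 ∧ ∀ y ∈ I, y • x • m = 0 := by
  obtain ⟨k, hk⟩ := hI
  suffices ∀ k, ∀ m : M, m ≠ 0 → (∀ z ∈ I ^ k, z • m = 0) →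
      ∃ x : R, x • m ≠ 0 ∧ ∀ y ∈ I, y • x • m = 0 from
    this k m hm fun z hz => by rw [show z = 0 by simpa [hk] using hz, zero_smul]
  intro k
  induction k with
  | zero => exact fun m hm h => absurd (by simpa using h 1 (by simp)) hm
  | succ k ih =>
    intro m hm hkill
    by_cases hsoc : ∀ y ∈ I, y • m = 0
    · exact ⟨1, by rwa [one_smul], by simpa only [one_smul]⟩
    push Not at hsoc
    obtain ⟨y, hyI, hym⟩ := hsoc
    obtain ⟨x, hx, hxI⟩ := ih (y • m) hym fun z hz => by
      rw [smul_smul]; exact hkill _ (pow_succ I k ▸ Ideal.mul_mem_mul hz hyI)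
    exact ⟨x * y, by rwa [mul_smul], by simpa only [mul_smul] using hxI⟩

namespace IsLocalRing.ResidueField

variable {T M : Type*} [CommRing T] [IsLocalRing T] [AddCommGroup M] [Module T M]

theorem linearMap_residue (ψ : ResidueField T →ₗ[T] M) (t : T) :
    ψ (residue T t) = t • ψ 1 := by
  rw [← map_smul, ← Algebra.algebraMap_eq_smul_one]
  rfl

theorem smul_linearMap_one_eq_zero (ψ : ResidueField T →ₗ[T] M) {y : T}
    (hy : y ∈ maximalIdeal T) : y • ψ 1 = 0 := by
  rw [← linearMap_residue, (residue_eq_zero_iff y).mpr hy, map_zero]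

theorem linearMap_ext_one {ψ ψ' : ResidueField T →ₗ[T] M} (h : ψ 1 = ψ' 1) : ψ = ψ' :=
  LinearMap.ext fun x => by
    obtain ⟨t, rfl⟩ := residue_surjective x
    rw [linearMap_residue, linearMap_residue, h]

theorem exists_linearMap_one_eq {u : M} (hu : ∀ y ∈ maximalIdeal T, y • u = 0) :
    ∃ ψ : ResidueField T →ₗ[T] M, ψ 1 = u :=
  ⟨(maximalIdeal T).liftQ (LinearMap.toSpanSingleton T M u) hu, one_smul T u⟩

theorem dvd_linearMap_one_of_forall_mul_eq_zero {φ : ResidueField T →ₗ[T] T}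
    (hφ : ∀ ψ : ResidueField T →ₗ[T] T, ∃ c : ResidueField T, ∀ x, ψ x = φ (c * x))
    {u : T} (hu0 : u ≠ 0) (hu : ∀ y ∈ maximalIdeal T, y * u = 0) : u ∣ φ 1 := by
  obtain ⟨ψ, hψ⟩ := exists_linearMap_one_eq (M := T) hu
  obtain ⟨c, hc⟩ := hφ ψ
  obtain ⟨a, rfl⟩ := residue_surjective c
  have hua : u = a * φ 1 := by rw [← hψ, hc, mul_one, linearMap_residue, smul_eq_mul]
  have ha : IsUnit a := by
    by_contra ha
    exact hu0 (hua ▸ smul_linearMap_one_eq_zero φ ((mem_maximalIdeal a).mpr ha))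
  exact ⟨↑ha.unit⁻¹, by rw [hua, mul_comm, ← mul_assoc, IsUnit.val_inv_mul, one_mul]⟩

end IsLocalRing.ResidueField

/-- Let `T` be a finite local commutative ring with maximal ideal `m` and
residue field `k = T/m`, and suppose that the `k`-vector space `Hom_T(k, T)` is one-dimensional
(i.e. there is a nonzero `T`-linear map `φ : k → T` such that every `T`-linear map `ψ : k → T`
is a `k`-multiple of `φ`, the `k`-action being precomposition with multiplication).  Then every
faithful `T`-module `N` contains a `T`-submodule free of rank `1` over `T`: there exists `n ∈ N`
such that `t ↦ t • n` is injective. -/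
theorem finite_local_gorenstein_faithful_module_contains_free_rank_one
    (T : Type*) [CommRing T] [Finite T] [IsLocalRing T]
    (hgor : ∃ φ : IsLocalRing.ResidueField T →ₗ[T] T, φ ≠ 0 ∧
      ∀ ψ : IsLocalRing.ResidueField T →ₗ[T] T, ∃ c : IsLocalRing.ResidueField T,
        ∀ x : IsLocalRing.ResidueField T, ψ x = φ (c * x))
    (N : Type*) [AddCommGroup N] [Module T N]
    (hfaith : ∀ t : T, (∀ n : N, t • n = 0) → t = 0) :
    ∃ n : N, Function.Injective fun t : T => t • n := by
  obtain ⟨φ, hφ0, hφ⟩ := hgor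
  have hs : φ 1 ≠ 0 := fun h => hφ0 (ResidueField.linearMap_ext_one h)
  obtain ⟨n, hn⟩ : ∃ n : N, φ 1 • n ≠ 0 := by
    by_contra! h
    exact hs (hfaith _ h)
  refine ⟨n, (injective_iff_map_eq_zero (LinearMap.toSpanSingleton T N n)).mpr fun t ht => ?_⟩
  by_contra ht0
  have hm : IsNilpotent (maximalIdeal T) :=
    (isArtinianRing_iff_isNilpotent_maximalIdeal T).mp inferInstance
  obtain ⟨x, hx, hxm⟩ := Ideal.exists_smul_ne_zero_and_forall_smul_eq_zero_of_isNilpotent hm ht0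
  obtain ⟨a, ha⟩ := ResidueField.dvd_linearMap_one_of_forall_mul_eq_zero hφ hx hxm
  apply hn
  rw [LinearMap.toSpanSingleton_apply] at ht
  rw [ha, mul_comm, mul_smul, smul_assoc, ht, smul_zero, smul_zero]
end

section
/- Let S be a finite commutative ring and suppose that for every maximal ideal m of S, writing S_m for the localization of S at m and κ(m) for the residue field of S_m, the κ(m)-vector space Hom_{S_m}(κ(m), S_m) of S_m-linear maps from κ(m) to S_m is one-dimensional. Then every faithful S-module M contains an S-submodule free of rank 1 over S; i.e., there exists x ∈ M such that the map S → M sending t to t·x is injective. -/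
/-!
For a maximal ideal `m` of `S` let `J_m = {a | m a = 0}`. Since `S` is Artinian, each maximal
ideal is a minimal prime, hence an associated prime of `S`, and the associated primes of a
nonzero ideal are maximal; so each `J_m` is nonzero and every nonzero ideal meets some `J_m`
outside `0`. The hypothesis on `S_m` makes `J_m`, which embeds into the socle
of `S_m`, one-dimensional over `S/m`: any nonzero `a_m ∈ J_m` generates it. Choosing `c_m ∉ m`
lying in all other maximal ideals, faithfulness gives `z_m` with `a_m c_m z_m ≠ 0`, and then
`x = ∑ c_m z_m` has `a_m x = a_m c_m z_m ≠ 0` for every `m`. If `t x = 0` with `t ≠ 0`, the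
annihilator of `x` contains a nonzero `b ∈ J_m` for some `m`; then `a_m ∈ S b` kills `x`.
-/

open IsLocalRing

namespace IsLocalRing

variable {L : Type*} [CommRing L] [IsLocalRing L]

theorem exists_linearMap_residueField_apply_one {γ : L}
    (hγ : ∀ z ∈ maximalIdeal L, z * γ = 0) : ∃ ψ : ResidueField L →ₗ[L] L, ψ 1 = γ :=
  ⟨(maximalIdeal L).liftQ (LinearMap.toSpanSingleton L L γ) hγ,
    (Submodule.liftQ_apply _ _ 1).trans (one_smul L γ)⟩

theorem exists_eq_mul_of_forall_mul_eq_zero (φ : ResidueField L →ₗ[L] L)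
    (hφ : ∀ ψ : ResidueField L →ₗ[L] L, ∃ c : ResidueField L, ∀ x, ψ x = φ (c * x))
    {α β : L} (hα0 : α ≠ 0) (hα : ∀ z ∈ maximalIdeal L, z * α = 0)
    (hβ : ∀ z ∈ maximalIdeal L, z * β = 0) : ∃ d : L, β = d * α := by
  have hφ_range : ∀ γ : L, (∀ z ∈ maximalIdeal L, z * γ = 0) → ∃ c, γ = φ c := fun γ hγ => by
    obtain ⟨ψ, hψ⟩ := exists_linearMap_residueField_apply_one hγ
    obtain ⟨c, hc⟩ := hφ ψ
    exact ⟨c, by rw [← hψ, hc, mul_one]⟩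
  obtain ⟨cα, rfl⟩ := hφ_range α hα
  obtain ⟨cβ, rfl⟩ := hφ_range β hβ
  have hcα0 : cα ≠ 0 := by rintro rfl; exact hα0 (map_zero φ)
  obtain ⟨d, hd⟩ := residue_surjective (cβ * cα⁻¹)
  refine ⟨d, ?_⟩
  rw [← smul_eq_mul, ← map_smul, Algebra.smul_def, ResidueField.algebraMap_eq, hd,
    inv_mul_cancel_right₀ hcα0]

end IsLocalRing

section

variable {R : Type*} [CommRing R]

theorem eq_zero_of_mul_eq_zero_of_notMem {m : Ideal R} [m.IsMaximal] {a u : R}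
    (ha : ∀ s ∈ m, s * a = 0) (hu : u ∉ m) (hua : u * a = 0) : a = 0 := by
  obtain ⟨v, i, hi, hvi⟩ := Ideal.IsMaximal.exists_inv ‹_› hu
  calc a = v * (u * a) + i * a := by rw [← mul_assoc, ← add_mul, hvi, one_mul]
    _ = 0 := by rw [hua, ha i hi, mul_zero, add_zero]

namespace Localization.AtPrime

variable (m : Ideal R) [m.IsMaximal]

theorem forall_mul_algebraMap_eq_zero {a : R} (ha : ∀ s ∈ m, s * a = 0) :
    ∀ z ∈ maximalIdeal (Localization.AtPrime m), z * algebraMap R _ a = 0 := by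
  rw [← map_eq_maximalIdeal]
  change Ideal.map _ m ≤ LinearMap.ker (LinearMap.toSpanSingleton _ _ _)
  rw [Ideal.map_le_iff_le_comap]
  intro s hs
  simp [← map_mul, ha s hs]

theorem algebraMap_ne_zero_of_forall_mul_eq_zero {a : R} (ha0 : a ≠ 0)
    (ha : ∀ s ∈ m, s * a = 0) : algebraMap R (Localization.AtPrime m) a ≠ 0 := by
  intro h
  obtain ⟨u, hu⟩ := (IsLocalization.map_eq_zero_iff m.primeCompl _ a).mp h
  exact ha0 (eq_zero_of_mul_eq_zero_of_notMem ha u.2 hu)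

theorem exists_eq_mul_of_forall_mul_eq_zero
    (φ : ResidueField (Localization.AtPrime m) →ₗ[Localization.AtPrime m] Localization.AtPrime m)
    (hφ : ∀ ψ : ResidueField (Localization.AtPrime m) →ₗ[Localization.AtPrime m]
      Localization.AtPrime m, ∃ c : ResidueField (Localization.AtPrime m), ∀ x, ψ x = φ (c * x))
    {a b : R} (ha0 : a ≠ 0) (ha : ∀ s ∈ m, s * a = 0) (hb : ∀ s ∈ m, s * b = 0) :
    ∃ s : R, b = s * a := by
  obtain ⟨d, hd⟩ := IsLocalRing.exists_eq_mul_of_forall_mul_eq_zero φ hφ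
    (algebraMap_ne_zero_of_forall_mul_eq_zero m ha0 ha) (forall_mul_algebraMap_eq_zero m ha)
    (forall_mul_algebraMap_eq_zero m hb)
  obtain ⟨s, hs⟩ := m.algebraMap_residueField_surjective (residue _ d)
  have hds : d - algebraMap R _ s ∈ maximalIdeal (Localization.AtPrime m) := by
    rw [← residue_eq_zero_iff, map_sub, ← hs, IsScalarTower.algebraMap_apply R
      (Localization.AtPrime m), ResidueField.algebraMap_eq, sub_self]
  have hzero : algebraMap R (Localization.AtPrime m) (b - s * a) = 0 := by
    rw [map_sub, map_mul, hd, ← sub_mul]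
    exact forall_mul_algebraMap_eq_zero m ha _ hds
  obtain ⟨u, hu⟩ := (IsLocalization.map_eq_zero_iff m.primeCompl _ _).mp hzero
  refine ⟨s, sub_eq_zero.mp (eq_zero_of_mul_eq_zero_of_notMem (fun t ht => ?_) u.2 hu)⟩
  rw [mul_sub, hb t ht, ← mul_assoc, mul_comm t, mul_assoc, ha t ht, mul_zero, sub_zero]

end Localization.AtPrime

namespace IsArtinianRing

variable [IsArtinianRing R]

theorem exists_ne_zero_forall_mul_eq_zero (m : Ideal R) [m.IsMaximal] :
    ∃ a ≠ 0, ∀ s ∈ m, s * a = 0 := by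
  have hmin : m ∈ (Module.annihilator R R).minimalPrimes :=
    mem_minimalPrimes (by simp [Module.annihilator_eq_bot.mpr inferInstance])
  obtain ⟨-, a, hma⟩ := isAssociatedPrime_iff.mp
    (Module.associatedPrimes.minimalPrimes_annihilator_subset_associatedPrimes R R hmin)
  have hmem : ∀ s, s ∈ m ↔ s * a = 0 := fun s => by
    rw [hma, Submodule.mem_colon_singleton, Submodule.mem_bot, smul_eq_mul]
  refine ⟨a, fun ha => Ideal.IsMaximal.ne_top ‹_› ?_, fun s hs => (hmem s).mp hs⟩
  exact (Ideal.eq_top_iff_one m).mpr ((hmem 1).mpr (by rw [ha, mul_zero]))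

theorem exists_mem_ne_zero_forall_mul_eq_zero {I : Ideal R} (hI : I ≠ ⊥) :
    ∃ m : Ideal R, m.IsMaximal ∧ ∃ b ∈ I, b ≠ 0 ∧ ∀ s ∈ m, s * b = 0 := by
  have : Nontrivial I := Submodule.nontrivial_iff_ne_bot.mpr hI
  obtain ⟨p, hp⟩ := associatedPrimes.nonempty R I
  obtain ⟨hprime, ⟨b, hbI⟩, hpb⟩ := isAssociatedPrime_iff.mp hp
  have hmem : ∀ s, s ∈ p ↔ s * b = 0 := fun s => by
    rw [hpb, Submodule.mem_colon_singleton, Submodule.mem_bot, Subtype.ext_iff]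
    rfl
  refine ⟨p, isMaximal_of_isPrime p, b, hbI, fun hb => hprime.ne_top ?_,
    fun s hs => (hmem s).mp hs⟩
  exact (Ideal.eq_top_iff_one p).mpr ((hmem 1).mpr (by rw [hb, mul_zero]))

end IsArtinianRing

section Semilocal

variable [Finite (MaximalSpectrum R)]

theorem MaximalSpectrum.exists_notMem_forall_mem_of_ne (m : MaximalSpectrum R) :
    ∃ c, c ∉ m.asIdeal ∧ ∀ n ≠ m, c ∈ n.asIdeal := by
  classical
  have := Fintype.ofFinite (MaximalSpectrum R)
  have hnle : ¬ (Finset.univ.erase m).inf asIdeal ≤ m.asIdeal := by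
    rw [m.isMaximal.isPrime.inf_le']
    rintro ⟨n, hn, hnm⟩
    exact (Finset.mem_erase.mp hn).1
      (MaximalSpectrum.ext (n.isMaximal.eq_of_le m.isMaximal.ne_top hnm))
  obtain ⟨c, hcI, hcm⟩ := SetLike.not_le_iff_exists.mp hnle
  exact ⟨c, hcm, fun n hn =>
    Finset.inf_le (f := asIdeal) (Finset.mem_erase.mpr ⟨hn, Finset.mem_univ n⟩) hcI⟩

theorem exists_forall_smul_ne_zero {M : Type*} [AddCommGroup M] [Module R M]
    (hM : ∀ t : R, (∀ x : M, t • x = 0) → t = 0) (a : MaximalSpectrum R → R)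
    (ha0 : ∀ m, a m ≠ 0) (ha : ∀ m, ∀ s ∈ m.asIdeal, s * a m = 0) :
    ∃ x : M, ∀ m, a m • x ≠ 0 := by
  have := Fintype.ofFinite (MaximalSpectrum R)
  choose c hcm hcn using MaximalSpectrum.exists_notMem_forall_mem_of_ne (R := R)
  have hz : ∀ m, ∃ z : M, (a m * c m) • z ≠ 0 := fun m => by
    by_contra! h
    exact ha0 m (eq_zero_of_mul_eq_zero_of_notMem (ha m) (hcm m) (by rw [mul_comm]; exact hM _ h))
  choose z hz using hz
  refine ⟨∑ n, c n • z n, fun m => ?_⟩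
  rw [Finset.smul_sum, Finset.sum_eq_single m (fun n _ hnm => ?_) (by simp), smul_smul]
  · exact hz m
  · rw [smul_smul, mul_comm, ha m _ (hcn n m (Ne.symm hnm)), zero_smul]

end Semilocal

end

/-- Let `S` be a finite commutative ring and suppose that for every maximal
ideal `m` of `S`, writing `S_m` for the localization of `S` at `m` and `κ(m)` for the residue
field of `S_m`, the `κ(m)`-vector space `Hom_{S_m}(κ(m), S_m)` is one-dimensional (i.e. there is
a nonzero `S_m`-linear map `φ : κ(m) → S_m` such that every `S_m`-linear map `ψ : κ(m) → S_m` is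
a `κ(m)`-multiple of `φ`).  Then every faithful `S`-module `M` contains an `S`-submodule free of
rank `1` over `S`: there exists `x ∈ M` such that `t ↦ t • x` is injective. -/
theorem finite_gorenstein_ring_faithful_module_contains_free_rank_one
    (S : Type*) [CommRing S] [Finite S]
    (hgor : ∀ (m : Ideal S) [m.IsMaximal],
      ∃ φ : IsLocalRing.ResidueField (Localization.AtPrime m) →ₗ[Localization.AtPrime m]
          Localization.AtPrime m, φ ≠ 0 ∧
        ∀ ψ : IsLocalRing.ResidueField (Localization.AtPrime m) →ₗ[Localization.AtPrime m]
            Localization.AtPrime m,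
          ∃ c : IsLocalRing.ResidueField (Localization.AtPrime m),
            ∀ x, ψ x = φ (c * x))
    (M : Type*) [AddCommGroup M] [Module S M]
    (hfaith : ∀ t : S, (∀ x : M, t • x = 0) → t = 0) :
    ∃ x : M, Function.Injective fun t : S => t • x := by
  choose a ha0 ha using fun m : MaximalSpectrum S =>
    IsArtinianRing.exists_ne_zero_forall_mul_eq_zero m.asIdeal
  obtain ⟨x, hx⟩ := exists_forall_smul_ne_zero hfaith a ha0 ha
  refine ⟨x, (injective_iff_map_eq_zero (LinearMap.toSpanSingleton S M x)).2 fun t ht => ?_⟩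
  by_contra ht0
  have hann : (S ∙ x).annihilator ≠ ⊥ := fun h => ht0 <| by
    rwa [← Submodule.mem_bot S, ← h, Submodule.mem_annihilator_span_singleton]
  obtain ⟨m, hm, b, hbx, hb0, hb⟩ := IsArtinianRing.exists_mem_ne_zero_forall_mul_eq_zero hann
  obtain ⟨φ, -, hφ⟩ := hgor m
  obtain ⟨s, hs⟩ :=
    Localization.AtPrime.exists_eq_mul_of_forall_mul_eq_zero m φ hφ hb0 hb (ha ⟨m, hm⟩)
  apply hx ⟨m, hm⟩
  rw [hs, mul_smul, (Submodule.mem_annihilator_span_singleton x b).mp hbx, smul_zero]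
end

section
/- Let K be a number field, let O be an order of K, and let f = {a ∈ O : a·x ∈ O for all x ∈ O_K} be the conductor of O, where O_K is the ring of integers of K. Then every ideal a of O with a + f = O is invertible as a fractional O-ideal, and a factors uniquely into prime ideals: there exists a unique finite multiset of prime ideals of O whose product equals a, and each prime ideal occurring in this factorization is invertible. -/
/-!
Let `𝔣` be the conductor and `S = 𝓞 K`, and write `1 = α + γ` with `α ∈ a`, `γ ∈ 𝔣`. As
`γ S ⊆ O` and `γ (aS) ⊆ a`, every `x ∈ S` is congruent modulo `aS` to `γ x ∈ O`, and
`aS ∩ O = a`: thus `O / a ≅ S / aS`. So on ideals prime to `𝔣`, extension `𝔞 ↦ 𝔞S` is injective,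
multiplicative and sends primes to primes, with contraction as its inverse; the factorisation of
`aS` in the Dedekind domain `S` therefore contracts to the unique prime factorisation of `a`.
Invertibility: `𝔣` is an `S`-module, so `a (𝔣 (aS)⁻¹ + O) = 𝔣 (aS) (aS)⁻¹ + a = 𝔣 + a = O`.
-/

open scoped nonZeroDivisors
open NumberField IsLocalization UniqueFactorizationMonoid

/-- The conductor of an order `O` in a number field `K`: the ideal of `O` consisting of those
`a ∈ O` such that `a * x ∈ O` for every element `x` of the ring of integers of `K`
(i.e. every `x : K` integral over `ℤ`). -/
def conductorIdeal (K : Type*) [Field K] (O : Subalgebra ℤ K) : Ideal ↥O where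
  carrier := {a : ↥O | ∀ x : K, IsIntegral ℤ x → (a : K) * x ∈ O}
  add_mem' := by
    intro a b ha hb x hx
    rw [Subalgebra.coe_add, add_mul]
    exact add_mem (ha x hx) (hb x hx)
  zero_mem' := by
    intro x hx
    simpa using O.zero_mem
  smul_mem' := by
    intro c a ha x hx
    rw [smul_eq_mul, Subalgebra.coe_mul, mul_assoc]
    exact mul_mem c.2 (ha x hx)

theorem Ideal.map_multiset_prod {R S : Type*} [CommSemiring R] [CommSemiring S] (f : R →+* S)
    (s : Multiset (Ideal R)) : s.prod.map f = (s.map (Ideal.map f)).prod :=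
  _root_.map_multiset_prod (Ideal.mapHom f) s

theorem Subalgebra.le_integralClosure_of_finite {R A : Type*} [CommRing R] [CommRing A]
    [Algebra R A] (S : Subalgebra R A) [Module.Finite R S] : S ≤ integralClosure R A :=
  le_integralClosure_iff_isIntegral.mpr inferInstance

namespace Submodule

variable {R A B : Type*} [CommSemiring R] [CommSemiring A] [CommSemiring B] [Algebra R A]
  [Algebra A B] [Algebra R B] [IsScalarTower R A B]

theorem mul_restrictScalars_eq_restrictScalars_span_mul (M : Submodule R B) (Q : Submodule A B) :
    M * Q.restrictScalars R = (span A (M : Set B) * Q).restrictScalars R := by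
  refine le_antisymm (mul_le.mpr fun m hm n hn => ?_) fun x hx => ?_
  · exact (restrictScalars_mem R _ _).mpr (mul_mem_mul (subset_span hm) hn)
  refine Submodule.mul_induction_on ((restrictScalars_mem R _ _).mp hx) (fun m hm n hn => ?_)
    (fun _ _ => add_mem)
  induction hm using span_induction generalizing n with
  | mem m hm => exact mul_mem_mul hm hn
  | zero => simp
  | add u v _ _ hu hv => rw [add_mul]; exact add_mem (hu n hn) (hv n hn)
  | smul s u _ hu =>
    rw [smul_mul_assoc, ← mul_smul_comm]
    exact hu _ (Q.smul_mem s hn)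

end Submodule

theorem isFractional_of_mul_le_one {R P : Type*} [CommRing R] [CommRing P] [Algebra R P]
    {S : Submonoid R} {I J : Submodule R P} {α : R} (hα : α ∈ S) (hαI : algebraMap R P α ∈ I)
    (h : I * J ≤ 1) : IsFractional S J := by
  refine ⟨α, hα, fun x hx => ?_⟩
  obtain ⟨y, hy⟩ := Submodule.mem_one.mp (h (Submodule.mul_mem_mul hαI hx))
  exact ⟨y, by rw [hy, Algebra.smul_def]⟩

namespace Algebra

variable (R S : Type*) [CommRing R] [CommRing S] [Algebra R S]

/-- The conductor `{r : R | r • S ⊆ R}`: the largest ideal of `S` contained in `R`, as an ideal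
of `R`. -/
def conductor : Ideal R := (1 : Submodule R S).colon Set.univ

variable {R S}

theorem mem_conductor_iff {c : R} :
    c ∈ conductor R S ↔ ∀ s : S, ∃ r : R, algebraMap R S r = algebraMap R S c * s := by
  simp [conductor, Submodule.mem_colon, Submodule.mem_one, Algebra.smul_def]

theorem mem_conductor_of_algebraMap_eq_mul {c r : R} (hc : c ∈ conductor R S) {s : S}
    (h : algebraMap R S r = algebraMap R S c * s) : r ∈ conductor R S := by
  rw [mem_conductor_iff] at hc ⊢
  intro t
  simpa [h, mul_assoc] using hc (s * t)

theorem exists_algebraMap_eq_mul_of_mem_conductor {a : Ideal R} {x : S}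
    (hx : x ∈ a.map (algebraMap R S)) {c : R} (hc : c ∈ conductor R S) :
    ∃ y ∈ a, algebraMap R S y = algebraMap R S c * x := by
  induction hx using Submodule.span_induction generalizing c with
  | mem x hx =>
    obtain ⟨r, hr, rfl⟩ := hx
    exact ⟨c * r, a.mul_mem_left c hr, map_mul _ _ _⟩
  | zero => exact ⟨0, a.zero_mem, by simp⟩
  | add x y _ _ hx hy =>
    obtain ⟨u, hu, hu'⟩ := hx hc
    obtain ⟨v, hv, hv'⟩ := hy hc
    exact ⟨u + v, a.add_mem hu hv, by rw [map_add, hu', hv', mul_add]⟩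
  | smul s x _ hx =>
    obtain ⟨r, hr⟩ := mem_conductor_iff.mp hc s
    obtain ⟨y, hy, hy'⟩ := hx (mem_conductor_of_algebraMap_eq_mul hc hr)
    exact ⟨y, hy, by rw [hy', hr, smul_eq_mul, mul_assoc]⟩

theorem exists_algebraMap_eq_sub_mul_of_sup_conductor_eq_top {a : Ideal R}
    (h : a ⊔ conductor R S = ⊤) (x : S) :
    ∃ α ∈ a, ∃ r : R, algebraMap R S r = algebraMap R S (1 - α) * x := by
  obtain ⟨α, hα, γ, hγ, hsum⟩ := Submodule.mem_sup.mp ((Ideal.eq_top_iff_one _).mp h)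
  obtain ⟨r, hr⟩ := mem_conductor_iff.mp hγ x
  exact ⟨α, hα, r, by rw [hr, ← hsum, add_sub_cancel_left]⟩

theorem sup_conductor_eq_top_of_le {a b : Ideal R} (hab : a ≤ b) (h : a ⊔ conductor R S = ⊤) :
    b ⊔ conductor R S = ⊤ :=
  top_unique (h ▸ sup_le_sup_right hab _)

theorem map_comap_of_sup_conductor_eq_top {P : Ideal S}
    (h : P.comap (algebraMap R S) ⊔ conductor R S = ⊤) :
    (P.comap (algebraMap R S)).map (algebraMap R S) = P := by
  refine le_antisymm Ideal.map_comap_le fun x hx => ?_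
  obtain ⟨α, hα, r, hr⟩ := exists_algebraMap_eq_sub_mul_of_sup_conductor_eq_top h x
  have hrP : r ∈ P.comap (algebraMap R S) := by
    rw [Ideal.mem_comap, hr]
    exact P.mul_mem_left _ hx
  have hx : x = algebraMap R S α * x + algebraMap R S r := by
    rw [hr, map_sub, map_one]
    ring
  rw [hx]
  exact add_mem (Ideal.mul_mem_right _ _ (Ideal.mem_map_of_mem _ hα)) (Ideal.mem_map_of_mem _ hrP)

section Faithful

variable [FaithfulSMul R S]

theorem map_algebraMap_ne_bot {a : Ideal R} (ha : a ≠ ⊥) : a.map (algebraMap R S) ≠ ⊥ :=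
  (Ideal.map_eq_bot_iff_of_injective (FaithfulSMul.algebraMap_injective R S)).not.mpr ha

theorem comap_map_of_sup_conductor_eq_top {a : Ideal R} (h : a ⊔ conductor R S = ⊤) :
    (a.map (algebraMap R S)).comap (algebraMap R S) = a := by
  refine le_antisymm (fun o ho => ?_) Ideal.le_comap_map
  obtain ⟨α, hα, γ, hγ, hsum⟩ := Submodule.mem_sup.mp ((Ideal.eq_top_iff_one _).mp h)
  obtain ⟨y, hy, hy'⟩ := exists_algebraMap_eq_mul_of_mem_conductor ho hγ
  have hyo : y = γ * o := FaithfulSMul.algebraMap_injective R S (by rw [hy', map_mul])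
  rw [← one_mul o, ← hsum, add_mul]
  exact a.add_mem (a.mul_mem_right o hα) (hyo ▸ hy)

noncomputable def quotEquivQuotMap {a : Ideal R} (h : a ⊔ conductor R S = ⊤) :
    R ⧸ a ≃+* S ⧸ a.map (algebraMap R S) :=
  RingEquiv.ofBijective (Ideal.quotientMap _ (algebraMap R S) Ideal.le_comap_map)
    ⟨Ideal.quotientMap_injective' (comap_map_of_sup_conductor_eq_top h).le, by
      rintro ⟨x⟩
      obtain ⟨α, hα, r, hr⟩ := exists_algebraMap_eq_sub_mul_of_sup_conductor_eq_top h x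
      refine ⟨Ideal.Quotient.mk a r, (Ideal.Quotient.eq.mpr ?_).symm⟩
      rw [hr, map_sub, map_one, sub_mul, one_mul, sub_sub_cancel]
      exact Ideal.mul_mem_right _ _ (Ideal.mem_map_of_mem _ hα)⟩

theorem isPrime_map_of_sup_conductor_eq_top {p : Ideal R} [p.IsPrime]
    (h : p ⊔ conductor R S = ⊤) : (p.map (algebraMap R S)).IsPrime :=
  (Ideal.Quotient.isDomain_iff_prime _).mp
    ((quotEquivQuotMap h).symm.toMulEquiv.isDomain (R ⧸ p))

section Dedekind

variable [IsDedekindDomain S] {a : Ideal R}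

theorem prod_map_comap_normalizedFactors (ha : a ≠ ⊥) (h : a ⊔ conductor R S = ⊤) :
    ((normalizedFactors (a.map (algebraMap R S))).map (Ideal.comap (algebraMap R S))).prod =
      a := by
  let T := normalizedFactors (a.map (algebraMap R S))
  have hT : ∀ Q ∈ T, Q.comap (algebraMap R S) ⊔ conductor R S = ⊤ := fun Q hQ =>
    sup_conductor_eq_top_of_le
      (Ideal.map_le_iff_le_comap.mp (Ideal.le_of_dvd (dvd_of_mem_normalizedFactors hQ))) h
  have hprod : (T.map (Ideal.comap (algebraMap R S))).prod ⊔ conductor R S = ⊤ := by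
    rw [sup_comm]
    refine Ideal.sup_multiset_prod_eq_top fun p hp => ?_
    obtain ⟨Q, hQ, rfl⟩ := Multiset.mem_map.mp hp
    rw [sup_comm]
    exact hT Q hQ
  have hid : T.map (Ideal.map (algebraMap R S) ∘ Ideal.comap (algebraMap R S)) = T :=
    (Multiset.map_congr rfl fun Q hQ => map_comap_of_sup_conductor_eq_top (hT Q hQ)).trans
      (Multiset.map_id T)
  have hmap : (T.map (Ideal.comap (algebraMap R S))).prod.map (algebraMap R S) =
      a.map (algebraMap R S) := by
    rw [Ideal.map_multiset_prod, Multiset.map_map, hid,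
      Ideal.prod_normalizedFactors_eq_self (map_algebraMap_ne_bot ha)]
  rw [← comap_map_of_sup_conductor_eq_top hprod, hmap, comap_map_of_sup_conductor_eq_top h]

theorem eq_map_comap_normalizedFactors (ha : a ≠ ⊥) (h : a ⊔ conductor R S = ⊤)
    {s : Multiset (Ideal R)} (hs : ∀ P ∈ s, P.IsPrime) (hsa : s.prod = a) :
    s = (normalizedFactors (a.map (algebraMap R S))).map (Ideal.comap (algebraMap R S)) := by
  have hle : ∀ P ∈ s, a ≤ P := fun P hP => hsa ▸ Ideal.le_of_dvd (Multiset.dvd_prod hP)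
  have hcop : ∀ P ∈ s, P ⊔ conductor R S = ⊤ := fun P hP =>
    sup_conductor_eq_top_of_le (hle P hP) h
  have hprime : ∀ Q ∈ s.map (Ideal.map (algebraMap R S)), Prime Q := by
    simp only [Multiset.mem_map]
    rintro _ ⟨P, hP, rfl⟩
    have : P.IsPrime := hs P hP
    exact Ideal.prime_of_isPrime (map_algebraMap_ne_bot (ne_bot_of_le_ne_bot ha (hle P hP)))
      (isPrime_map_of_sup_conductor_eq_top (hcop P hP))
  rw [← hsa, Ideal.map_multiset_prod, normalizedFactors_prod_of_prime hprime,
    Multiset.map_map]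
  conv_lhs => rw [← Multiset.map_id s]
  exact Multiset.map_congr rfl fun P hP => (comap_map_of_sup_conductor_eq_top (hcop P hP)).symm

theorem existsUnique_prime_factorization_of_sup_conductor_eq_top (ha : a ≠ ⊥)
    (h : a ⊔ conductor R S = ⊤) :
    ∃! s : Multiset (Ideal R), (∀ P ∈ s, P.IsPrime) ∧ s.prod = a := by
  refine ⟨_, ⟨?_, prod_map_comap_normalizedFactors ha h⟩,
    fun s hs => eq_map_comap_normalizedFactors ha h hs.1 hs.2⟩
  simp only [Multiset.mem_map]
  rintro _ ⟨Q, hQ, rfl⟩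
  exact (Ideal.isPrime_of_prime (prime_of_normalized_factor Q hQ)).comap _

end Dedekind

end Faithful

section FractionalIdeal

variable {K : Type*} [Field K] [Algebra R K] [Algebra S K] [IsScalarTower R S K]

theorem span_coeSubmodule_eq_coeSubmodule_map (a : Ideal R) :
    Submodule.span S (coeSubmodule K a : Set K) = coeSubmodule K (a.map (algebraMap R S)) := by
  rw [Ideal.map, Ideal.span, coeSubmodule_span, Set.image_image, coeSubmodule, Submodule.map_coe]
  simp_rw [← IsScalarTower.algebraMap_apply]
  rfl

theorem coeSubmodule_conductor_mul_one :
    coeSubmodule K (conductor R S) * (1 : Submodule S K).restrictScalars R =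
      coeSubmodule K (conductor R S) := by
  refine le_antisymm (Submodule.mul_le.mpr ?_) fun x hx =>
    mul_one x ▸ Submodule.mul_mem_mul hx (Submodule.mem_one.mpr ⟨1, map_one _⟩)
  rintro _ ⟨c, hc, rfl⟩ x hx
  obtain ⟨s, rfl⟩ := Submodule.mem_one.mp hx
  obtain ⟨r, hr⟩ := mem_conductor_iff.mp hc s
  refine ⟨r, mem_conductor_of_algebraMap_eq_mul hc hr, ?_⟩
  simp only [Algebra.linearMap_apply, IsScalarTower.algebraMap_apply R S K, hr, map_mul]

theorem isUnit_coeIdeal_of_sup_conductor_eq_top [IsDomain R] [FaithfulSMul R S]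
    [IsDedekindDomain S] [IsFractionRing S K] {a : Ideal R} (ha : a ≠ ⊥)
    (h : a ⊔ conductor R S = ⊤) : IsUnit (a : FractionalIdeal R⁰ K) := by
  set A := coeSubmodule K a
  set F := coeSubmodule K (conductor R S)
  set B : Submodule S K := ↑((a.map (algebraMap R S) : FractionalIdeal S⁰ K)⁻¹)
  have haS : (a.map (algebraMap R S) : FractionalIdeal S⁰ K) ≠ 0 :=
    FractionalIdeal.coeIdeal_ne_zero.mpr (map_algebraMap_ne_bot ha)
  have hAB : Submodule.span S (A : Set K) * B = 1 := by
    rw [span_coeSubmodule_eq_coeSubmodule_map, ← FractionalIdeal.coe_coeIdeal,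
      ← FractionalIdeal.coe_mul, mul_inv_cancel₀ haS, FractionalIdeal.coe_one]
  have hAN : A * (F * B.restrictScalars R + 1) = 1 :=
    calc A * (F * B.restrictScalars R + 1) = F * (A * B.restrictScalars R) + A := by
          rw [mul_add, mul_one, mul_left_comm]
      _ = F * (Submodule.span S (A : Set K) * B).restrictScalars R + A := by
          rw [Submodule.mul_restrictScalars_eq_restrictScalars_span_mul]
      _ = F + A := by rw [hAB, coeSubmodule_conductor_mul_one]
      _ = 1 := by
          rw [Submodule.add_eq_sup, ← coeSubmodule_sup, sup_comm, h, coeSubmodule_top]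
  obtain ⟨α, hα, hα0⟩ := Submodule.exists_mem_ne_zero_of_ne_bot ha
  let N : FractionalIdeal R⁰ K := ⟨_, isFractional_of_mul_le_one (I := A)
    (mem_nonZeroDivisors_of_ne_zero hα0) ⟨α, hα, rfl⟩ hAN.le⟩
  refine IsUnit.of_mul_eq_one N (FractionalIdeal.coeToSubmodule_inj.mp ?_)
  rw [FractionalIdeal.coe_mul, FractionalIdeal.coe_coeIdeal, FractionalIdeal.coe_one]
  exact hAN

end FractionalIdeal

end Algebra

section Order

variable {K : Type*} [Field K] (O : Subalgebra ℤ K) [Module.Finite ℤ O]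

instance : Algebra O (𝓞 K) :=
  RingHom.toAlgebra (S := 𝓞 K) (Subalgebra.inclusion O.le_integralClosure_of_finite).toRingHom

instance : IsScalarTower O (𝓞 K) K := IsScalarTower.of_algebraMap_eq fun _ => rfl

instance : FaithfulSMul O (𝓞 K) :=
  (faithfulSMul_iff_algebraMap_injective O (𝓞 K)).mpr (Subalgebra.inclusion_injective _)

theorem conductorIdeal_eq_conductor : conductorIdeal K O = Algebra.conductor O (𝓞 K) := by
  ext c
  rw [Algebra.mem_conductor_iff]
  refine ⟨fun hc s => ⟨⟨_, hc s s.2⟩, rfl⟩, fun hc x hx => ?_⟩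
  obtain ⟨r, hr⟩ := hc ⟨x, hx⟩
  have hrx : (r : K) = c * x := congrArg (fun y : 𝓞 K => (y : K)) hr
  exact hrx ▸ r.2

end Order

theorem order_ideal_coprime_conductor_invertible_and_unique_factorization_general
    (K : Type*) [Field K] [NumberField K] (O : Subalgebra ℤ K)
    [Module.Finite ℤ ↥O]
    (a : Ideal ↥O) (ha : a ≠ ⊥) (hcop : a ⊔ conductorIdeal K O = ⊤) :
    (∃ I : FractionalIdeal (nonZeroDivisors ↥O) K,
        (a : FractionalIdeal (nonZeroDivisors ↥O) K) * I = 1) ∧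
    (∃! s : Multiset (Ideal ↥O), (∀ P ∈ s, P.IsPrime) ∧ s.prod = a) ∧
    (∀ s : Multiset (Ideal ↥O), (∀ P ∈ s, P.IsPrime) → s.prod = a →
      ∀ P ∈ s, ∃ I : FractionalIdeal (nonZeroDivisors ↥O) K,
        (P : FractionalIdeal (nonZeroDivisors ↥O) K) * I = 1) := by
  rw [conductorIdeal_eq_conductor] at hcop
  refine ⟨isUnit_iff_exists_inv.mp (Algebra.isUnit_coeIdeal_of_sup_conductor_eq_top ha hcop),
    Algebra.existsUnique_prime_factorization_of_sup_conductor_eq_top ha hcop, ?_⟩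
  intro s _ hsa P hP
  have haP : a ≤ P := hsa ▸ Ideal.le_of_dvd (Multiset.dvd_prod hP)
  exact isUnit_iff_exists_inv.mp (Algebra.isUnit_coeIdeal_of_sup_conductor_eq_top
    (ne_bot_of_le_ne_bot ha haP) (Algebra.sup_conductor_eq_top_of_le haP hcop))

/-- Let `K` be a number field, `O` an order of `K` and `f` its conductor.
Every nonzero ideal `a` of `O` with `a + f = O` is invertible as a fractional `O`-ideal, it
factors uniquely into prime ideals (there is a unique multiset of prime ideals of `O` whose
product is `a`), and every prime ideal occurring in such a factorization is invertible. -/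
theorem order_ideal_coprime_conductor_invertible_and_unique_factorization
    (K : Type*) [Field K] [NumberField K] (O : Subalgebra ℤ K)
    [Module.Finite ℤ ↥O] [IsFractionRing ↥O K]
    (a : Ideal ↥O) (ha : a ≠ ⊥) (hcop : a ⊔ conductorIdeal K O = ⊤) :
    (∃ I : FractionalIdeal (nonZeroDivisors ↥O) K,
        (a : FractionalIdeal (nonZeroDivisors ↥O) K) * I = 1) ∧
    (∃! s : Multiset (Ideal ↥O), (∀ P ∈ s, P.IsPrime) ∧ s.prod = a) ∧
    (∀ s : Multiset (Ideal ↥O), (∀ P ∈ s, P.IsPrime) → s.prod = a →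
      ∀ P ∈ s, ∃ I : FractionalIdeal (nonZeroDivisors ↥O) K,
        (P : FractionalIdeal (nonZeroDivisors ↥O) K) * I = 1) :=
  order_ideal_coprime_conductor_invertible_and_unique_factorization_general K O a ha hcop
end

section
/- Let Z be a commutative ring, let D be a division ring that is an associative unital Z-algebra (so the image of Z under the structure map is contained in the center of D), and let R be a Z-subalgebra of D. Let I and J be ideals of Z and c ∈ Z be such that I·J = cZ and the image of c in D is nonzero. Let N = I•R be the Z-submodule of D spanned by all products a·u with a the image in D of an element of I and u ∈ R. Then the right order of N in D equals R: for x ∈ D, one has n·x ∈ N for all n ∈ N if and only if x ∈ R. -/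
/-- Let `Z` be a commutative ring, `D` a division ring which is an associative
unital `Z`-algebra, and `R` a `Z`-subalgebra of `D`.  Let `I`, `J` be ideals of `Z` and `c ∈ Z`
with `I·J = cZ` and the image of `c` in `D` nonzero.  Let `N = I•R` be the `Z`-submodule of `D`
spanned by products of images of elements of `I` with elements of `R`.  Then the right order of
`N` in `D` equals `R`: for `x ∈ D`, one has `n * x ∈ N` for all `n ∈ N` if and only if
`x ∈ R`. -/
theorem rightOrder_of_extension_of_invertible_central_ideal
    (Z D : Type*) [CommRing Z] [DivisionRing D] [Algebra Z D]
    (R : Subalgebra Z D) (I J : Ideal Z) (c : Z)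
    (hIJ : I * J = Ideal.span {c}) (hc : algebraMap Z D c ≠ 0) (x : D) :
    (∀ n ∈ I • Subalgebra.toSubmodule R, n * x ∈ I • Subalgebra.toSubmodule R) ↔ x ∈ R := by
  set M := Subalgebra.toSubmodule R with hM
  constructor
  · intro h
    -- key lemma: multiplying N by elements of J lands in c • R
    have key : ∀ n ∈ I • M, ∀ b ∈ J, ∃ r ∈ R, b • n = algebraMap Z D c * r := by
      intro n hn
      refine Submodule.smul_induction_on hn ?_ ?_
      · intro a ha u hu b hb
        have hab : a * b ∈ Ideal.span {c} := by
          rw [← hIJ]; exact Ideal.mul_mem_mul ha hb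
        obtain ⟨z, hz⟩ := Ideal.mem_span_singleton'.mp hab
        refine ⟨z • u, Submodule.smul_mem M z hu, ?_⟩
        rw [smul_smul, mul_comm b a, ← hz, mul_comm z c, mul_smul,
          Algebra.smul_def]
      · intro n₁ n₂ h₁ h₂ b hb
        obtain ⟨r₁, hr₁, e₁⟩ := h₁ b hb
        obtain ⟨r₂, hr₂, e₂⟩ := h₂ b hb
        exact ⟨r₁ + r₂, add_mem hr₁ hr₂, by rw [smul_add, e₁, e₂, mul_add]⟩
    have hcmem : c ∈ I * J := by rw [hIJ]; exact Ideal.mem_span_singleton_self c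
    have main : ∀ w ∈ I * J, ∃ r ∈ R, w • x = algebraMap Z D c * r := by
      intro w hw
      refine Submodule.mul_induction_on hw ?_ ?_
      · intro a ha b hb
        have hax : a • x ∈ I • M := by
          have : (a • (1 : D)) * x ∈ I • M :=
            h _ (Submodule.smul_mem_smul ha (one_mem R))
          simpa [smul_mul_assoc] using this
        obtain ⟨r, hr, e⟩ := key _ hax b hb
        exact ⟨r, hr, by rw [mul_comm a b, mul_smul, e]⟩
      · intro z₁ z₂ h₁ h₂
        obtain ⟨r₁, hr₁, e₁⟩ := h₁
        obtain ⟨r₂, hr₂, e₂⟩ := h₂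
        exact ⟨r₁ + r₂, add_mem hr₁ hr₂, by rw [add_smul, e₁, e₂, mul_add]⟩
    obtain ⟨r, hr, e⟩ := main c hcmem
    have heq : algebraMap Z D c * x = algebraMap Z D c * r := by
      rw [← Algebra.smul_def, e]
    have := mul_left_cancel₀ hc heq
    rwa [this]
  · intro hx n hn
    refine Submodule.smul_induction_on hn ?_ ?_
    · intro a ha u hu
      rw [smul_mul_assoc]
      exact Submodule.smul_mem_smul ha ((Subalgebra.mem_toSubmodule R).mpr (mul_mem ((Subalgebra.mem_toSubmodule R).mp hu) hx))
    · intro n₁ n₂ h₁ h₂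
      rw [add_mul]; exact Submodule.add_mem _ h₁ h₂
end

section
/- Let Z be a commutative ring, let D be a division ring that is an associative unital Z-algebra, and let R be a Z-subalgebra of D. Let I and J be ideals of Z and c ∈ Z be such that I·J = cZ and the image of c in D is nonzero. Let N = I•R be the Z-submodule of D spanned by all products of the image in D of an element of I with an element of R, and for a Z-submodule M of D define (R : M) := {x ∈ D : x·m ∈ R for all m ∈ M}. Then (R : (R : N)) = N. -/
section Aux

variable {Z D : Type*} [CommRing Z] [DivisionRing D] [Algebra Z D]

private lemma aux_mul_mem (R : Subalgebra Z D) (A B : Ideal Z) (c : Z)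
    (hAB : A * B = Ideal.span {c}) :
    ∀ a ∈ A • Subalgebra.toSubmodule R, ∀ b ∈ B • Subalgebra.toSubmodule R,
      a * b ∈ Submodule.map (LinearMap.mulLeft Z (algebraMap Z D c))
        (Subalgebra.toSubmodule R) := by
  intro a ha
  refine Submodule.smul_induction_on ha ?_ ?_
  · intro i hi r hr
    intro b hb
    refine Submodule.smul_induction_on hb ?_ ?_
    · intro j hj s hs
      have hij : i * j ∈ Ideal.span {c} := hAB ▸ Ideal.mul_mem_mul hi hj
      obtain ⟨z, hz⟩ := Ideal.mem_span_singleton'.mp hij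
      refine ⟨z • (r * s), Submodule.smul_mem _ z (R.mul_mem hr hs), ?_⟩
      show algebraMap Z D c * (z • (r * s)) = (i • r) * (j • s)
      rw [smul_mul_smul_comm, ← hz, mul_smul]
      simp only [Algebra.smul_def]
      rw [← mul_assoc, ← map_mul, mul_comm c z, map_mul, mul_assoc]
    · intro x y hx hy
      rw [mul_add]
      exact Submodule.add_mem _ hx hy
  · intro x y hx hy b hb
    rw [add_mul]
    exact Submodule.add_mem _ (hx b hb) (hy b hb)

end Aux

/-- Let `Z` be a commutative ring, `D` a division ring which is an associative
unital `Z`-algebra, and `R` a `Z`-subalgebra of `D`.  Let `I`, `J` be ideals of `Z` and `c ∈ Z`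
with `I·J = cZ` and the image of `c` in `D` nonzero.  Let `N = I•R` be the `Z`-submodule of `D`
spanned by products of images of elements of `I` with elements of `R`, and for a `Z`-submodule
`M` of `D` set `(R : M) = {x ∈ D : x·m ∈ R for all m ∈ M}`.  Then `(R : (R : N)) = N`. -/
theorem colon_colon_of_extension_of_invertible_central_ideal
    (Z D : Type*) [CommRing Z] [DivisionRing D] [Algebra Z D]
    (R : Subalgebra Z D) (I J : Ideal Z) (c : Z)
    (hIJ : I * J = Ideal.span {c}) (hc : algebraMap Z D c ≠ 0) :
    {x : D | ∀ m ∈ {y : D | ∀ n ∈ I • Subalgebra.toSubmodule R, y * n ∈ R}, x * m ∈ R}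
      = ((I • Subalgebra.toSubmodule R : Submodule Z D) : Set D) := by
  set u : D := algebraMap Z D c with hu
  have hJI : J * I = Ideal.span {c} := by rw [mul_comm]; exact hIJ
  have hcIJ : c ∈ I * J := hIJ ▸ Ideal.mem_span_singleton_self c
  have hcom : ∀ d : D, Commute u d := fun d => Algebra.commutes c d
  have hcom' : ∀ d : D, Commute u⁻¹ d := fun d => (hcom d).inv_left₀
  -- key products
  have keyIJ := aux_mul_mem R I J c hIJ
  have keyJI := aux_mul_mem R J I c hJI
  ext x
  simp only [Set.mem_setOf_eq, SetLike.mem_coe]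
  constructor
  · -- (R : (R : N)) ⊆ N
    intro hx
    -- for j ∈ J, the element u⁻¹ * (j • 1) lies in (R : N)
    have hm : ∀ j ∈ J, ∀ n ∈ I • Subalgebra.toSubmodule R, (u⁻¹ * (j • (1 : D))) * n ∈ R := by
      intro j hj n hn
      obtain ⟨r, hr, hur⟩ := keyJI (j • (1 : D))
        (Submodule.smul_mem_smul hj R.one_mem) n hn
      simp only [LinearMap.mulLeft_apply] at hur
      rw [mul_assoc, ← hur, ← mul_assoc, inv_mul_cancel₀ hc, one_mul]
      exact hr
    -- hence j • x ∈ u • R for all j ∈ J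
    have hjx : ∀ j ∈ J, j • x ∈ Submodule.map (LinearMap.mulLeft Z u)
        (Subalgebra.toSubmodule R) := by
      intro j hj
      have h1 : x * (u⁻¹ * (j • (1 : D))) ∈ R := hx _ (hm j hj)
      refine ⟨x * (u⁻¹ * (j • (1 : D))), h1, ?_⟩
      show u * (x * (u⁻¹ * (j • (1 : D)))) = j • x
      rw [mul_smul_comm, mul_one, mul_smul_comm, mul_smul_comm,
        ← (hcom' x).eq, ← mul_assoc, mul_inv_cancel₀ hc, one_mul]
    -- c • x ∈ u • (I • R)
    have hcx : c • x ∈ Submodule.map (LinearMap.mulLeft Z u)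
        (I • Subalgebra.toSubmodule R) := by
      refine Submodule.mul_induction_on hcIJ ?_ ?_
      · intro i hi j hj
        obtain ⟨r, hr, hur⟩ := hjx j hj
        simp only [LinearMap.mulLeft_apply] at hur
        refine ⟨i • r, Submodule.smul_mem_smul hi hr, ?_⟩
        show u * (i • r) = (i * j) • x
        rw [mul_smul_comm, hur, smul_smul]
      · intro a b ha hb
        rw [add_smul]
        exact Submodule.add_mem _ ha hb
    obtain ⟨s, hs, hus⟩ := hcx
    simp only [LinearMap.mulLeft_apply] at hus
    have : u * s = u * x := by rw [hus]; exact Algebra.smul_def c x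
    have hxs : x = s := (mul_left_cancel₀ hc this).symm
    rw [hxs]; exact hs
  · -- N ⊆ (R : (R : N))
    intro hxN m hm
    -- c • m ∈ J • R
    have hcm : c • m ∈ J • Subalgebra.toSubmodule R := by
      refine Submodule.mul_induction_on hcIJ ?_ ?_
      · intro i hi j hj
        have him : i • m ∈ R := by
          have := hm (i • (1 : D)) (Submodule.smul_mem_smul hi R.one_mem)
          rwa [mul_smul_comm, mul_one] at this
        have h2 : (i * j) • m = j • (i • m) := by rw [mul_comm, mul_smul]
        rw [h2]
        exact Submodule.smul_mem_smul hj him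
      · intro a b ha hb
        rw [add_smul]
        exact Submodule.add_mem _ ha hb
    obtain ⟨r, hr, hur⟩ := keyIJ x hxN (c • m) hcm
    simp only [LinearMap.mulLeft_apply] at hur
    have h3 : u * r = u * (x * m) := by
      rw [hur, mul_smul_comm, Algebra.smul_def]
    have h4 := mul_left_cancel₀ hc h3
    rw [← h4]; exact hr
end

section
/- Let K be a number field, let O be an order of K with conductor f, and let s ∈ O be a nonzero element with sO + f = O (so that sO is a product of invertible prime ideals of O). Let d ≥ 1 and let M be an O-module such that M^d (the direct sum of d copies of M) is isomorphic to (O/sO)^d as O-modules. Then M is isomorphic to O/sO as O-modules. -/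
/-!
Over a semilocal ring `R`, an isomorphism `M^d ≅ R^d` makes `M` finite and flat, and comparing
dimensions after base change to the residue field `R/P` shows that `(R/P) ⊗ M` is a line for
every maximal ideal `P`; so `M` is free of rank one by the semilocal freeness criterion
`Module.nonempty_basis_of_flat_of_finrank_eq`. For the theorem, `O/sO` is finite, hence semilocal,
and `M` is killed by `s` because it embeds diagonally into `M^d`; so everything descends to
`O/sO`-modules.
-/

open Module TensorProduct

namespace Module

variable {R M : Type*} [CommRing R] [AddCommGroup M] [Module R M] {d : ℕ}

theorem Finite.of_pi_linearEquiv_pi (hd : 0 < d) (e : (Fin d → M) ≃ₗ[R] (Fin d → R)) :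
    Module.Finite R M :=
  have : Module.Finite R (Fin d → M) := .equiv e.symm
  .of_pi (fun _ => M) (⟨0, hd⟩ : Fin d)

theorem Flat.of_pi_linearEquiv_pi (hd : 0 < d) (e : (Fin d → M) ≃ₗ[R] (Fin d → R)) :
    Flat R M :=
  have : Flat R (Fin d → M) := .of_linearEquiv e
  .of_retract (LinearMap.single R (fun _ => M) (⟨0, hd⟩ : Fin d)) (LinearMap.proj ⟨0, hd⟩)
    (LinearMap.proj_comp_single_same _ _ _)

theorem finrank_baseChange_eq_one_of_pi_linearEquiv_pi (k : Type*) [Field k] [Algebra R k]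
    [Module.Finite R M] (hd : 0 < d) (e : (Fin d → M) ≃ₗ[R] (Fin d → R)) :
    finrank k (k ⊗[R] M) = 1 := by
  have := (algebraMap R k).domain_nontrivial
  have h := ((piRight R k k fun _ : Fin d => M).symm ≪≫ₗ e.baseChange R k _ _).finrank_eq
  rw [finrank_baseChange, finrank_fin_fun, finrank_pi_fintype, Finset.sum_const,
    Finset.card_univ, Fintype.card_fin, smul_eq_mul] at h
  exact (Nat.mul_eq_left hd.ne').mp h

theorem nonempty_linearEquiv_of_pi_linearEquiv_pi [Finite (MaximalSpectrum R)] (hd : 0 < d)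
    (e : (Fin d → M) ≃ₗ[R] (Fin d → R)) : Nonempty (M ≃ₗ[R] R) := by
  have := Module.Finite.of_pi_linearEquiv_pi hd e
  have := Flat.of_pi_linearEquiv_pi hd e
  obtain ⟨b⟩ := nonempty_basis_of_flat_of_finrank_eq R M 1 fun P =>
    let := Ideal.Quotient.field P.asIdeal
    finrank_baseChange_eq_one_of_pi_linearEquiv_pi _ hd e
  exact ⟨b.equivFun ≪≫ₗ LinearEquiv.funUnique (Fin 1) R R⟩

theorem IsTorsionBySet.of_injective {N : Type*} [AddCommGroup N] [Module R N] {S : Set R}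
    (hN : IsTorsionBySet R N S) (f : M →ₗ[R] N) (hf : Function.Injective f) :
    IsTorsionBySet R M S :=
  fun x a => hf (by rw [map_smul, hN, map_zero])

theorem nonempty_linearEquiv_quotient_of_pi_linearEquiv_pi (I : Ideal R)
    [Finite (MaximalSpectrum (R ⧸ I))] (hd : 0 < d) (e : (Fin d → M) ≃ₗ[R] (Fin d → R ⧸ I)) :
    Nonempty (M ≃ₗ[R] R ⧸ I) := by
  have : Nonempty (Fin d) := ⟨⟨0, hd⟩⟩
  have hq : IsTorsionBySet R (R ⧸ I) I :=
    (isTorsionBySet_iff_subset_annihilator R (R ⧸ I)).mpr Ideal.annihilator_quotient.ge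
  have hI : IsTorsionBySet R (Fin d → R ⧸ I) I := fun x a => funext fun i => @hq (x i) a
  let := (hI.of_injective (e.toLinearMap ∘ₗ LinearMap.pi fun _ => LinearMap.id)
    (e.injective.comp Function.const_injective)).module
  obtain ⟨f⟩ := nonempty_linearEquiv_of_pi_linearEquiv_pi hd
    (e.extendScalarsOfSurjective Ideal.Quotient.mk_surjective)
  exact ⟨f.restrictScalars R⟩

end Module

theorem cancellation_for_modules_over_quotient_of_order_general
    (K : Type*) [Field K] [NumberField K] (O : Subalgebra ℤ K)
    [Module.Finite ℤ ↥O]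
    (s : ↥O) (hs : s ≠ 0)
    (d : ℕ) (hd : 1 ≤ d)
    (M : Type*) [AddCommGroup M] [Module ↥O M]
    (e : (Fin d → M) ≃ₗ[↥O] (Fin d → ↥O ⧸ Ideal.span {s})) :
    Nonempty (M ≃ₗ[↥O] ↥O ⧸ Ideal.span {s}) := by
  have : Finite (O ⧸ Ideal.span {s}) :=
    Ideal.finiteQuotientOfFreeOfNeBot _ (by simpa using hs)
  exact nonempty_linearEquiv_quotient_of_pi_linearEquiv_pi _ hd e

set_option synthInstance.maxHeartbeats 800000 in
/-- Let `K` be a number field, `O` an order of `K` with conductor `f`, and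
`s ∈ O` nonzero with `sO + f = O` (so `sO` is a product of invertible prime ideals of `O`).
Let `d ≥ 1` and let `M` be an `O`-module such that `M^d ≅ (O/sO)^d` as `O`-modules.  Then
`M ≅ O/sO` as `O`-modules. -/
theorem cancellation_for_modules_over_quotient_of_order
    (K : Type*) [Field K] [NumberField K] (O : Subalgebra ℤ K)
    [Module.Finite ℤ ↥O] [IsFractionRing ↥O K]
    (s : ↥O) (hs : s ≠ 0) (hcop : Ideal.span {s} ⊔ conductorIdeal K O = ⊤)
    (d : ℕ) (hd : 1 ≤ d)
    (M : Type*) [AddCommGroup M] [Module ↥O M]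
    (e : (Fin d → M) ≃ₗ[↥O] (Fin d → ↥O ⧸ Ideal.span {s})) :
    Nonempty (M ≃ₗ[↥O] ↥O ⧸ Ideal.span {s}) :=
  cancellation_for_modules_over_quotient_of_order_general K O s hs d hd M e
end
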